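/- Let n ≥ 1 be an integer, 0 < R₁ < R₂, and let a, b be vectors in a real normed vector space F. Define f : ℝⁿ \ {0} → F by f(x) = a + (log(‖x‖/R₁)/log(R₂/R₁)) · (b − a). Then for every real p with p ≠ n, ∫_{ {x : R₁ < ‖x‖ < R₂} } ‖Df(x)‖^p dx = n · Vol(B(0,1)) · (‖b − a‖/log(R₂/R₁))^p · (R₂^{n−p} − R₁^{n−p})/(n−p), where ‖Df(x)‖ denotes the operator norm of the Fréchet derivative of f at x, the integral is with respect to Lebesgue measure on ℝⁿ, and B(0,1) is the Euclidean unit ball. -/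

import Mathlib

/-!
Away from the origin the norm has a derivative of operator norm one, so the comparison map has
derivative of norm `‖b - a‖ / (log (R₂ / R₁) * ‖x‖)`. The `p`-energy is therefore the integral of
a radial function, which polar coordinates (`integral_fun_norm_addHaar`) reduce to
`n · vol(B(0,1)) · ∫_{R₁}^{R₂} r ^ (n - 1 - p) dr`.
-/

open MeasureTheory Set Metric Real

section Derivative

variable {E F : Type*} [NormedAddCommGroup E] [NormedSpace ℝ E]
  [NormedAddCommGroup F] [NormedSpace ℝ F]

theorem norm_fderiv_const_add_smul_const {φ : E → ℝ} {x : E} (hφ : DifferentiableAt ℝ φ x)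
    (a v : F) : ‖fderiv ℝ (fun y => a + φ y • v) x‖ = ‖fderiv ℝ φ x‖ * ‖v‖ := by
  rw [fderiv_const_add, fderiv_smul_const hφ, ContinuousLinearMap.norm_smulRight_apply]

theorem hasFDerivAt_log_norm_div_div {x : E} (hd : DifferentiableAt ℝ (‖·‖) x) (hx : x ≠ 0)
    {r : ℝ} (hr : r ≠ 0) (c : ℝ) :
    HasFDerivAt (fun y => log (‖y‖ / r) / c) ((c⁻¹ * ‖x‖⁻¹) • fderiv ℝ (‖·‖) x) x := by
  have hlog := (hd.hasFDerivAt.const_mul r⁻¹).log (by simpa using ⟨hr, hx⟩)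
  have := hlog.const_mul c⁻¹
  simp only [inv_mul_eq_div] at this
  refine this.congr_fderiv ?_
  rw [smul_smul, smul_smul]
  congr 1
  field_simp

theorem norm_fderiv_log_comparison_map {x : E} (hd : DifferentiableAt ℝ (‖·‖) x) (hx : x ≠ 0)
    {r : ℝ} (hr : r ≠ 0) (c : ℝ) (a b : F) :
    ‖fderiv ℝ (fun y => a + (log (‖y‖ / r) / c) • (b - a)) x‖ = ‖b - a‖ / (|c| * ‖x‖) := by
  have : Nontrivial E := nontrivial_of_ne x 0 hx
  have hφ := hasFDerivAt_log_norm_div_div hd hx hr c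
  rw [norm_fderiv_const_add_smul_const hφ.differentiableAt, hφ.fderiv, norm_smul,
    norm_fderiv_norm hd, norm_mul, norm_inv, norm_inv, norm_norm, Real.norm_eq_abs]
  field_simp

end Derivative

section Annulus

variable {E F : Type*} [NormedAddCommGroup E] [NormedSpace ℝ E] [FiniteDimensional ℝ E]
  [Nontrivial E] [MeasurableSpace E] [BorelSpace E] (μ : Measure E) [μ.IsAddHaarMeasure]
  [NormedAddCommGroup F] [NormedSpace ℝ F]

theorem setIntegral_annulus_fun_norm {R₁ R₂ : ℝ} (h1 : 0 ≤ R₁) (f : ℝ → F) :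
    ∫ x in {x : E | R₁ < ‖x‖ ∧ ‖x‖ < R₂}, f ‖x‖ ∂μ =
      Module.finrank ℝ E • μ.real (ball 0 1) •
        ∫ y in Ioo R₁ R₂, y ^ (Module.finrank ℝ E - 1) • f y := by
  have hs : {x : E | R₁ < ‖x‖ ∧ ‖x‖ < R₂} = (‖·‖) ⁻¹' Ioo R₁ R₂ := rfl
  rw [hs, ← integral_indicator (measurable_norm measurableSet_Ioo)]
  have hcomp : ((‖·‖) ⁻¹' Ioo R₁ R₂).indicator (fun x : E => f ‖x‖) =
      fun x => (Ioo R₁ R₂).indicator f ‖x‖ := funext fun _ => indicator_comp_right (‖·‖)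
  rw [hcomp, integral_fun_norm_addHaar μ, ← indicator_smul, integral_indicator measurableSet_Ioo,
    Measure.restrict_restrict measurableSet_Ioo,
    inter_eq_left.2 (Ioo_subset_Ioi_self.trans (Ioi_subset_Ioi h1))]

theorem integral_Ioo_pow_pred_mul_rpow_neg {n : ℕ} (hn : n ≠ 0) {R₁ R₂ p : ℝ} (h1 : 0 < R₁)
    (h12 : R₁ ≤ R₂) (hp : p ≠ n) :
    ∫ y in Ioo R₁ R₂, y ^ (n - 1) * y ^ (-p) =
      (R₂ ^ ((n : ℝ) - p) - R₁ ^ ((n : ℝ) - p)) / ((n : ℝ) - p) := by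
  have hpow : EqOn (fun y : ℝ => y ^ (n - 1) * y ^ (-p)) (fun y => y ^ ((n : ℝ) - 1 - p))
      (Ioo R₁ R₂) := fun y hy => by
    beta_reduce
    rw [sub_eq_add_neg _ p, rpow_add (h1.trans hy.1), ← rpow_natCast,
      Nat.cast_sub (Nat.one_le_iff_ne_zero.2 hn), Nat.cast_one]
  have h0 : (0 : ℝ) ∉ uIcc R₁ R₂ := by
    rw [uIcc_of_le h12]
    exact fun h => h1.not_ge h.1
  have hr : (n : ℝ) - 1 - p ≠ -1 := fun h => hp (by linarith)
  rw [setIntegral_congr_fun measurableSet_Ioo hpow, ← integral_Ioc_eq_integral_Ioo,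
    ← intervalIntegral.integral_of_le h12, integral_rpow (Or.inr ⟨hr, h0⟩),
    sub_right_comm, sub_add_cancel]

theorem setIntegral_annulus_norm_rpow_neg {R₁ R₂ p : ℝ} (h1 : 0 < R₁) (h12 : R₁ ≤ R₂)
    (hp : p ≠ Module.finrank ℝ E) :
    ∫ x in {x : E | R₁ < ‖x‖ ∧ ‖x‖ < R₂}, ‖x‖ ^ (-p) ∂μ =
      Module.finrank ℝ E * μ.real (ball 0 1) *
        ((R₂ ^ (Module.finrank ℝ E - p) - R₁ ^ (Module.finrank ℝ E - p)) /
          (Module.finrank ℝ E - p)) := by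
  rw [setIntegral_annulus_fun_norm μ h1.le (fun t => t ^ (-p)), nsmul_eq_mul, smul_eq_mul,
    mul_assoc]
  simp_rw [smul_eq_mul]
  rw [integral_Ioo_pow_pred_mul_rpow_neg Module.finrank_pos.ne' h1 h12 hp]

end Annulus

/-- Euclidean core of Lemma 4.3: the `p`-energy of the logarithmic comparison map
`f(x) = a + (log(‖x‖/R₁)/log(R₂/R₁))(b − a)` on the annulus `{R₁ < ‖x‖ < R₂}` equals
`n·Vol(B(0,1))·(‖b−a‖/log(R₂/R₁))^p·(R₂^{n−p} − R₁^{n−p})/(n−p)` for every real `p ≠ n`. -/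
theorem integral_annulus_norm_fderiv_log_comparison_map
    (n : ℕ) (hn : 1 ≤ n) (R₁ R₂ : ℝ) (h1 : 0 < R₁) (h12 : R₁ < R₂)
    {F : Type*} [NormedAddCommGroup F] [NormedSpace ℝ F] (a b : F)
    (p : ℝ) (hp : p ≠ n) :
    ∫ x in {x : EuclideanSpace ℝ (Fin n) | R₁ < ‖x‖ ∧ ‖x‖ < R₂},
        ‖fderiv ℝ (fun y : EuclideanSpace ℝ (Fin n) =>
            a + (Real.log (‖y‖ / R₁) / Real.log (R₂ / R₁)) • (b - a)) x‖ ^ p =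
      (n * (volume (Metric.ball (0 : EuclideanSpace ℝ (Fin n)) 1)).toReal) *
        (‖b - a‖ / Real.log (R₂ / R₁)) ^ p *
        ((R₂ ^ ((n : ℝ) - p) - R₁ ^ ((n : ℝ) - p)) / ((n : ℝ) - p)) := by
  have : Nonempty (Fin n) := ⟨⟨0, hn⟩⟩
  have hc : 0 < log (R₂ / R₁) := log_pos ((one_lt_div h1).2 h12)
  have hs : MeasurableSet {x : EuclideanSpace ℝ (Fin n) | R₁ < ‖x‖ ∧ ‖x‖ < R₂} :=
    measurable_norm measurableSet_Ioo
  calc _ = ∫ x in {x : EuclideanSpace ℝ (Fin n) | R₁ < ‖x‖ ∧ ‖x‖ < R₂},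
        (‖b - a‖ / log (R₂ / R₁)) ^ p * ‖x‖ ^ (-p) := by
        refine setIntegral_congr_fun hs fun x hx => ?_
        have hx0 : x ≠ 0 := norm_pos_iff.1 (h1.trans hx.1)
        have hd := (contDiffAt_norm ℝ hx0).differentiableAt (n := 1) one_ne_zero
        rw [norm_fderiv_log_comparison_map hd hx0 h1.ne' _ a b, abs_of_pos hc, ← div_div,
          div_rpow (by positivity) (norm_nonneg x), rpow_neg (norm_nonneg x), div_eq_mul_inv]
    _ = _ := by
        rw [integral_const_mul, setIntegral_annulus_norm_rpow_neg volume h1 h12.le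
          (by simpa using hp), finrank_euclideanSpace_fin, measureReal_def]
        ring
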